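/- If (φ, ψ) is a stable payoff vector supporting a feasible binary assignment x (i.e., φ, ψ ≥ 0, φ_i + ψ_j ≥ a_{ij} for all i, j, and ∑_i φ_i + ∑_j ε_j ψ_j = ∑_{i,j} a_{ij} x_{ij}), then x is an optimal assignment: ∑_{i,j} a_{ij} x_{ij} ≥ ∑_{i,j} a_{ij} x'_{ij} for every feasible binary assignment x'. -/
import Mathlib


/-- a stably supported feasible binary assignment is optimal. -/
theorem stmt_6 {I J : Type} [Fintype I] [Fintype J]
    (a : I → J → ℝ) (ε : J → ℕ)
    (x : I → J → ℝ) (φ : I → ℝ) (ψ : J → ℝ)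
    (hxbin : ∀ i j, x i j = 0 ∨ x i j = 1)
    (hrow : ∀ i, ∑ j, x i j ≤ 1)
    (hcap : ∀ j, ∑ i, x i j ≤ (ε j : ℝ))
    (hφ : ∀ i, 0 ≤ φ i) (hψ : ∀ j, 0 ≤ ψ j)
    (hdual : ∀ i j, a i j ≤ φ i + ψ j)
    (heq : ∑ i, φ i + ∑ j, (ε j : ℝ) * ψ j = ∑ i, ∑ j, a i j * x i j) :
    ∀ x' : I → J → ℝ,
      (∀ i j, x' i j = 0 ∨ x' i j = 1) →
      (∀ i, ∑ j, x' i j ≤ 1) →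
      (∀ j, ∑ i, x' i j ≤ (ε j : ℝ)) →
      ∑ i, ∑ j, a i j * x' i j ≤ ∑ i, ∑ j, a i j * x i j := by
  intro x' hbin' hrow' hcap'
  have hnn : ∀ i j, 0 ≤ x' i j := by
    intro i j; rcases hbin' i j with h | h <;> simp [h]
  have key : ∑ i, ∑ j, a i j * x' i j ≤ ∑ i, φ i + ∑ j, (ε j : ℝ) * ψ j := by
    have h1 : ∑ i, ∑ j, a i j * x' i j ≤ ∑ i, ∑ j, (φ i + ψ j) * x' i j := by
      apply Finset.sum_le_sum; intro i _
      apply Finset.sum_le_sum; intro j _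
      exact mul_le_mul_of_nonneg_right (hdual i j) (hnn i j)
    refine h1.trans ?_
    have h2 : ∑ i, ∑ j, (φ i + ψ j) * x' i j
        = ∑ i, φ i * ∑ j, x' i j + ∑ j, ψ j * ∑ i, x' i j := by
      simp only [add_mul, Finset.sum_add_distrib, Finset.mul_sum]
      congr 1
      exact Finset.sum_comm
    rw [h2]
    apply add_le_add
    · apply Finset.sum_le_sum; intro i _
      calc φ i * ∑ j, x' i j ≤ φ i * 1 :=
            mul_le_mul_of_nonneg_left (hrow' i) (hφ i)
        _ = φ i := mul_one _
    · apply Finset.sum_le_sum; intro j _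
      calc ψ j * ∑ i, x' i j ≤ ψ j * (ε j : ℝ) :=
            mul_le_mul_of_nonneg_left (hcap' j) (hψ j)
        _ = (ε j : ℝ) * ψ j := mul_comm _ _
  linarith [key, heq]
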